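/- arXiv:1308.0676 — 2 statements merged into one kernel-verified Lean document; each statement's English description precedes it below -/
import Mathlib

section
/- Let N be a von Neumann algebra with a faithful normal tracial state τ, let A be a von Neumann subalgebra of N, and let n ≥ 1. If N ⊖ A equals the SOT-closure of the linear span of its unitary elements, i.e. N ⊖ A = span{u : u ∈ U(N ⊖ A)}^‾(SOT), then the same holds one matrix level up: the set Mₙ(N ⊖ A) of all n×n matrices with every entry in N ⊖ A equals the closure, in the strong operator topology of Mₙ(N) ⊆ B(Hⁿ), of the linear span of the set of unitary elements of Mₙ(N) all of whose entries lie in N ⊖ A; that is, Mₙ(N ⊖ A) = span{u : u ∈ U(Mₙ(N ⊖ A))}^‾(SOT). -/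
open scoped ComplexOrder

/-- The closure of a set of bounded operators in the strong operator topology, i.e. the
topology of pointwise convergence on `H`. -/
def sotClosure {H : Type*} [NormedAddCommGroup H] [InnerProductSpace ℂ H]
    (S : Set (H →L[ℂ] H)) : Set (H →L[ℂ] H) :=
  {x | (⇑x : H → H) ∈ closure ((fun T : H →L[ℂ] H => (⇑T : H → H)) '' S)}

/-- The weak operator topology on the bounded operators on `H`: the topology induced by the
functionals `T ↦ ⟪T u, v⟫`. -/
noncomputable def wotTopology (H : Type*) [NormedAddCommGroup H] [InnerProductSpace ℂ H] :
    TopologicalSpace (H →L[ℂ] H) :=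
  TopologicalSpace.induced
    (fun T : H →L[ℂ] H => fun u v : H => (inner ℂ (T u) v : ℂ)) inferInstance

variable {H : Type*} [NormedAddCommGroup H] [InnerProductSpace ℂ H] [CompleteSpace H]

/-- `τ` is a faithful normal tracial state on the von Neumann algebra `N`: it is linear on `N`,
unital, tracial, positive and faithful on `N`, and WOT-continuous on the closed unit ball
of `N`. -/
structure IsFaithfulNormalTracialState (N : VonNeumannAlgebra H)
    (τ : (H →L[ℂ] H) → ℂ) : Prop where
  map_add : ∀ x ∈ N, ∀ y ∈ N, τ (x + y) = τ x + τ y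
  map_smul : ∀ x ∈ N, ∀ c : ℂ, τ (c • x) = c * τ x
  map_one : τ 1 = 1
  tracial : ∀ x ∈ N, ∀ y ∈ N, τ (x * y) = τ (y * x)
  nonneg : ∀ x ∈ N, 0 ≤ τ (star x * x)
  faithful : ∀ x ∈ N, τ (star x * x) = 0 → x = 0
  normal : @ContinuousOn _ _ (wotTopology H) _ τ {x : H →L[ℂ] H | x ∈ N ∧ ‖x‖ ≤ 1}

/-- `N` is a factor of type II₁: it is infinite dimensional as a complex vector space and has
trivial center (it carries a faithful normal tracial state, which is supplied separately). -/
structure IsTypeII1Factor (N : VonNeumannAlgebra H) : Prop where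
  infinite_dimensional :
    ¬ ∃ s : Finset (H →L[ℂ] H), ∀ x ∈ N, x ∈ Submodule.span ℂ (s : Set (H →L[ℂ] H))
  center_trivial : ∀ x ∈ N, (∀ y ∈ N, x * y = y * x) → ∃ c : ℂ, x = c • (1 : H →L[ℂ] H)

/-- The orthogonal complement `N ⊖ A = {x ∈ N : τ(a⋆ x) = 0 for all a ∈ A}`. -/
def ominus (N : VonNeumannAlgebra H) (A : Set (H →L[ℂ] H)) (τ : (H →L[ℂ] H) → ℂ) :
    Set (H →L[ℂ] H) :=
  {x | x ∈ N ∧ ∀ a ∈ A, τ (star a * x) = 0}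

/-- The strong-operator-topology closure of a set of `n × n` matrices of bounded operators,
for the strong operator topology of `Mₙ(B(H)) = B(Hⁿ)` (equivalently, entrywise pointwise
convergence on `H`). -/
def sotClosureMatrix {H : Type*} [NormedAddCommGroup H] [InnerProductSpace ℂ H] {n : ℕ}
    (S : Set (Matrix (Fin n) (Fin n) (H →L[ℂ] H))) :
    Set (Matrix (Fin n) (Fin n) (H →L[ℂ] H)) :=
  {x | (fun i j => (⇑(x i j) : H → H)) ∈
      closure ((fun T : Matrix (Fin n) (Fin n) (H →L[ℂ] H) =>
        fun i j => (⇑(T i j) : H → H)) '' S)}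

/-!
The hypothesis exhibits `S = N ⊖ A` as the SOT-closure of a subspace, so `S` is an SOT-closed
subspace. SOT-closure of matrices is entrywise, so `Mₙ(S)` is SOT-closed and is the SOT-closure of
`Mₙ(span U(S))`; it remains to put each matrix unit `u eᵢⱼ` with `u ∈ U(S)` into the span of
`U(Mₙ(S))`. With `P` the permutation matrix of the transposition `(i j)`, it is the average of the
unitaries `diag(u, …, u) P` and `diag(-u, …, u, …, -u) P` (the `u` in position `i`), whose entries
are `0` and `±u`.
-/

namespace Matrix

section
variable {ι R : Type*} [Fintype ι] [DecidableEq ι] [NonAssocSemiring R]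

lemma diagonal_mul_permMatrix_mem_matrix {S : Set R} (h0 : 0 ∈ S) {d : ι → R}
    (hd : ∀ k, d k ∈ S) (σ : Equiv.Perm ι) : diagonal d * σ.permMatrix R ∈ S.matrix := by
  intro k l
  rw [diagonal_mul]
  by_cases h : σ k = l <;> simp [h, hd k, h0]

lemma single_mul_permMatrix_swap (i j : ι) (r : R) :
    single i i r * (Equiv.swap i j).permMatrix R = single i j r := by
  rw [PEquiv.mul_toMatrix_toPEquiv]
  ext k l
  simp [single_apply, eq_comm (a := i), Equiv.swap_apply_eq_iff, eq_comm (a := l)]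
end

section
variable {ι R : Type*} [Fintype ι] [DecidableEq ι] [Semiring R] [StarRing R]

lemma diagonal_mem_unitary {d : ι → R} (hd : ∀ k, d k ∈ unitary R) :
    diagonal d ∈ unitary (Matrix ι ι R) := by
  simp only [Unitary.mem_iff, star_eq_conjTranspose, diagonal_conjTranspose,
    diagonal_mul_diagonal, ← diagonal_one]
  constructor <;> congr 1 <;> funext k
  exacts [Unitary.star_mul_self_of_mem (hd k), Unitary.mul_star_self_of_mem (hd k)]

lemma permMatrix_mem_unitary (σ : Equiv.Perm ι) : σ.permMatrix R ∈ unitary (Matrix ι ι R) := by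
  simp only [Unitary.mem_iff, star_eq_conjTranspose, conjTranspose_permMatrix,
    ← permMatrix_mul, mul_inv_cancel, inv_mul_cancel, permMatrix_one, and_self]
end

end Matrix

section Span

variable {ι 𝕜 R : Type*} [Fintype ι] [DecidableEq ι] [DivisionRing 𝕜] [CharZero 𝕜]
  [Ring R] [StarRing R] [Module 𝕜 R]

namespace Matrix

lemma single_mem_span_matrix_inter_unitary (S : Submodule 𝕜 R) {u : R} (hu : u ∈ S)
    (huU : u ∈ unitary R) (i j : ι) :
    single i j u ∈ Submodule.span 𝕜 ((S : Set R).matrix ∩ unitary (Matrix ι ι R)) := by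
  set d : ι → R := fun _ => u
  set d' : ι → R := Function.update (fun _ => -u) i u
  have hsum : diagonal d + diagonal d' = single i i u + single i i u := by
    rw [← diagonal_single, diagonal_add, diagonal_add]
    congr 1
    funext k
    by_cases hk : k = i
    · subst hk; simp [d, d']
    · simp [d, d', hk]
  have hmem : ∀ e : ι → R, (∀ k, e k ∈ S ∧ e k ∈ unitary R) →
      diagonal e * (Equiv.swap i j).permMatrix R ∈ Submodule.span 𝕜
        ((S : Set R).matrix ∩ unitary (Matrix ι ι R)) := fun e he =>
    Submodule.subset_span
      ⟨diagonal_mul_permMatrix_mem_matrix S.zero_mem (fun k => (he k).1) _,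
        mul_mem (diagonal_mem_unitary fun k => (he k).2) (permMatrix_mem_unitary _)⟩
  have hd' : ∀ k, d' k ∈ S ∧ d' k ∈ unitary R :=
    Function.forall_update_iff _ (p := fun _ r => r ∈ S ∧ r ∈ unitary R) |>.2
      ⟨⟨hu, huU⟩, fun _ _ => ⟨S.neg_mem hu, (-(⟨u, huU⟩ : unitary R)).2⟩⟩
  rw [← inv_smul_smul₀ (two_ne_zero (α := 𝕜)) (single i j u), two_smul,
    ← single_mul_permMatrix_swap, ← add_mul, ← hsum, add_mul]
  exact Submodule.smul_mem _ _ (add_mem (hmem d fun _ => ⟨hu, huU⟩) (hmem d' hd'))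

end Matrix

theorem Submodule.matrix_span_inter_unitary_le (S : Submodule 𝕜 R) :
    (span 𝕜 ((S : Set R) ∩ unitary R)).matrix ≤
      span 𝕜 ((S : Set R).matrix ∩ (unitary (Matrix ι ι R) : Set (Matrix ι ι R))) := by
  intro x hx
  rw [Matrix.matrix_eq_sum_single x]
  refine sum_mem fun i _ => sum_mem fun j _ => ?_
  have hle : span 𝕜 ((S : Set R) ∩ unitary R) ≤
      (span 𝕜 ((S : Set R).matrix ∩ (unitary (Matrix ι ι R) : Set (Matrix ι ι R)))).comap
        (Matrix.singleLinearMap 𝕜 i j) :=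
    span_le.2 fun u hu => Matrix.single_mem_span_matrix_inter_unitary S hu.1 hu.2 i j
  exact hle (hx i j)

end Span

section StrongOperatorTopology

variable {H : Type*} [NormedAddCommGroup H] [InnerProductSpace ℂ H]

def sotClosureSubmodule (p : Submodule ℂ (H →L[ℂ] H)) : Submodule ℂ (H →L[ℂ] H) :=
  let coeFn := LinearMap.ltoFun ℂ H H ℂ ∘ₗ ContinuousLinearMap.coeLM ℂ
  (p.map coeFn).topologicalClosure.comap coeFn

lemma coe_sotClosureSubmodule (p : Submodule ℂ (H →L[ℂ] H)) :
    (sotClosureSubmodule p : Set (H →L[ℂ] H)) = sotClosure p :=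
  rfl

lemma subset_sotClosure (S : Set (H →L[ℂ] H)) : S ⊆ sotClosure S :=
  fun x hx => subset_closure ⟨x, hx, rfl⟩

lemma sotClosure_sotClosure (S : Set (H →L[ℂ] H)) : sotClosure (sotClosure S) = sotClosure S :=
  Set.Subset.antisymm
    (fun _ hx => closure_minimal (Set.image_preimage_subset _ _) isClosed_closure hx)
    (subset_sotClosure _)

lemma sotClosureMatrix_mono {n : ℕ} {S T : Set (Matrix (Fin n) (Fin n) (H →L[ℂ] H))}
    (h : S ⊆ T) : sotClosureMatrix S ⊆ sotClosureMatrix T :=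
  fun _ hx => closure_mono (Set.image_mono h) hx

lemma sotClosureMatrix_matrix {n : ℕ} (S : Set (H →L[ℂ] H)) :
    sotClosureMatrix (S.matrix : Set (Matrix (Fin n) (Fin n) (H →L[ℂ] H))) =
      (sotClosure S).matrix := by
  have himage : (fun T : Matrix (Fin n) (Fin n) (H →L[ℂ] H) => fun i j => (⇑(T i j) : H → H)) ''
      S.matrix = Set.univ.pi fun _ => Set.univ.pi fun _ => (⇑) '' S := by
    ext f
    constructor
    · rintro ⟨T, hT, rfl⟩ i - j -
      exact ⟨T i j, hT i j, rfl⟩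
    · intro hf
      choose T hT hTf using fun i j => hf i trivial j trivial
      exact ⟨Matrix.of T, hT, funext₂ hTf⟩
  ext x
  simp only [sotClosureMatrix, himage, closure_pi_set, Set.mem_ofPred_eq, Set.mem_univ_pi]
  rfl

end StrongOperatorTopology

theorem matrix_eq_sotClosureMatrix_span_unitary_of_eq_sotClosure {H : Type*}
    [NormedAddCommGroup H] [InnerProductSpace ℂ H] [CompleteSpace H] {n : ℕ}
    {S : Set (H →L[ℂ] H)} (hS : S = sotClosure (Submodule.span ℂ (S ∩ unitary (H →L[ℂ] H)))) :
    (S.matrix : Set (Matrix (Fin n) (Fin n) (H →L[ℂ] H))) =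
      sotClosureMatrix (↑(Submodule.span ℂ
        ((S.matrix : Set (Matrix (Fin n) (Fin n) (H →L[ℂ] H))) ∩
          unitary (Matrix (Fin n) (Fin n) (H →L[ℂ] H))))) := by
  obtain ⟨S, rfl⟩ : ∃ S' : Submodule ℂ (H →L[ℂ] H), (S' : Set (H →L[ℂ] H)) = S :=
    ⟨sotClosureSubmodule _, (coe_sotClosureSubmodule _).trans hS.symm⟩
  set p := Submodule.span ℂ ((S : Set (H →L[ℂ] H)) ∩ unitary (H →L[ℂ] H))
  have hclosed : sotClosure (S : Set (H →L[ℂ] H)) = S := by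
    conv_lhs => rw [hS]
    rw [sotClosure_sotClosure, ← hS]
  apply Set.Subset.antisymm
  · calc ((S : Set (H →L[ℂ] H)).matrix : Set (Matrix (Fin n) (Fin n) (H →L[ℂ] H)))
        = sotClosureMatrix (p : Set (H →L[ℂ] H)).matrix := by rw [sotClosureMatrix_matrix, ← hS]
      _ ⊆ _ := sotClosureMatrix_mono (Submodule.matrix_span_inter_unitary_le (ι := Fin n) S)
  · calc _ ⊆ sotClosureMatrix (S : Set (H →L[ℂ] H)).matrix :=
          sotClosureMatrix_mono fun _ hx =>
            (Submodule.span_le (p := S.matrix)).2 (fun _ hy => hy.1) hx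
      _ = (S : Set (H →L[ℂ] H)).matrix := by rw [sotClosureMatrix_matrix, hclosed]

theorem matrix_ominus_eq_sotClosure_span_unitary_general
    (N : VonNeumannAlgebra H) (τ : (H →L[ℂ] H) → ℂ)
    (A : VonNeumannAlgebra H)
    (n : ℕ)
    (hbase : ominus N (↑A) τ =
      sotClosure (↑(Submodule.span ℂ
        {u : H →L[ℂ] H | u ∈ ominus N (↑A) τ ∧ u ∈ unitary (H →L[ℂ] H)}))) :
    {x : Matrix (Fin n) (Fin n) (H →L[ℂ] H) | ∀ i j, x i j ∈ ominus N (↑A) τ} =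
      sotClosureMatrix (↑(Submodule.span ℂ
        {u : Matrix (Fin n) (Fin n) (H →L[ℂ] H) |
          (∀ i j, u i j ∈ ominus N (↑A) τ) ∧
            u ∈ unitary (Matrix (Fin n) (Fin n) (H →L[ℂ] H))})) :=
  matrix_eq_sotClosureMatrix_span_unitary_of_eq_sotClosure hbase

/-- Let `N` be a von Neumann algebra with faithful normal tracial state `τ`
and `A ⊆ N` a von Neumann subalgebra.  If `N ⊖ A` equals the SOT-closure of the span of its
unitaries, then `Mₙ(N ⊖ A)` equals the SOT-closure of the span of the unitaries of `Mₙ(N)`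
all of whose entries lie in `N ⊖ A`. -/
theorem matrix_ominus_eq_sotClosure_span_unitary
    [TopologicalSpace.SeparableSpace H]
    (N : VonNeumannAlgebra H) (τ : (H →L[ℂ] H) → ℂ)
    (hτ : IsFaithfulNormalTracialState N τ)
    (A : VonNeumannAlgebra H) (hAN : (A : Set (H →L[ℂ] H)) ⊆ (N : Set (H →L[ℂ] H)))
    (n : ℕ) (hn : 1 ≤ n)
    (hbase : ominus N (↑A) τ =
      sotClosure (↑(Submodule.span ℂ
        {u : H →L[ℂ] H | u ∈ ominus N (↑A) τ ∧ u ∈ unitary (H →L[ℂ] H)}))) :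
    {x : Matrix (Fin n) (Fin n) (H →L[ℂ] H) | ∀ i j, x i j ∈ ominus N (↑A) τ} =
      sotClosureMatrix (↑(Submodule.span ℂ
        {u : Matrix (Fin n) (Fin n) (H →L[ℂ] H) |
          (∀ i j, u i j ∈ ominus N (↑A) τ) ∧
            u ∈ unitary (Matrix (Fin n) (Fin n) (H →L[ℂ] H))})) :=
  matrix_ominus_eq_sotClosure_span_unitary_general N τ A n hbase
end

section
/- Let M be a unital C*-algebra, let x₁, x₂ ∈ M be self-adjoint with ‖x₁‖ ≤ 1 and ‖x₂‖ ≤ 1, and write a = √(1−x₁²), b = √(1−x₂²) for the positive square roots given by continuous functional calculus. Then the 4×4 matrices ũ₁ = [[x₁, 0, a, 0], [0, x₂, 0, b], [0, −b, 0, x₂], [−a, 0, x₁, 0]] and ũ₂ = [[x₁, 0, a, 0], [0, x₂, 0, b], [0, b, 0, −x₂], [a, 0, −x₁, 0]] are unitary elements of M₄(M), and diag(x₁, x₂, 0, 0) = ½ũ₁ + ½ũ₂ − ũ₃, where ũ₃ is the 4×4 matrix whose (1,3) entry is a, whose (2,4) entry is b, and whose other entries are 0. -/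
/-!
For a self-adjoint contraction `x`, the element `a = √(1 - x²)` is self-adjoint, commutes with `x`
(it is a continuous function of `x`) and satisfies `x² + a² = 1`; hence the "rotation"
`[[x, a], [-a, x]]` is unitary. The matrix `ũ₁` interleaves the rotations built from `x₁` and `x₂`,
and `ũ₂ = diag(1, 1, -1, -1) ũ₁`. The decomposition of `diag(x₁, x₂, 0, 0)` is entrywise.
-/

open CFC

section Contraction

variable {A : Type*} [CStarAlgebra A] [PartialOrder A] [StarOrderedRing A]

lemma IsSelfAdjoint.mul_self_le_one {x : A} (hx : IsSelfAdjoint x) (hx₁ : ‖x‖ ≤ 1) :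
    x * x ≤ 1 := by
  rw [← CStarAlgebra.norm_le_one_iff_of_nonneg (x * x) hx.mul_self_nonneg, hx.norm_mul_self]
  exact pow_le_one₀ (norm_nonneg x) hx₁

lemma IsSelfAdjoint.mul_self_add_sqrt_one_sub_mul_self {x : A} (hx : IsSelfAdjoint x)
    (hx₁ : ‖x‖ ≤ 1) : x * x + sqrt (1 - x * x) * sqrt (1 - x * x) = 1 := by
  rw [sqrt_mul_sqrt_self _ (sub_nonneg.2 (hx.mul_self_le_one hx₁)), add_sub_cancel]

lemma commute_sqrt_one_sub_mul_self (x : A) : Commute x (sqrt (1 - x * x)) := by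
  have h : Commute (1 - x * x) x :=
    (Commute.one_left x).sub_left ((Commute.refl x).mul_left (Commute.refl x))
  rw [sqrt_eq_cfc]
  exact (h.cfc_nnreal _).symm

end Contraction

namespace Matrix

lemma diagonal_mem_unitary_s11 {n R : Type*} [Fintype n] [DecidableEq n] [Ring R] [StarRing R]
    {d : n → R} (hd : ∀ i, d i ∈ unitary R) : diagonal d ∈ unitary (Matrix n n R) := by
  rw [Unitary.mem_iff, star_eq_conjTranspose, diagonal_conjTranspose, diagonal_mul_diagonal,
    diagonal_mul_diagonal, ← diagonal_one]
  exact ⟨congrArg diagonal (funext fun i ↦ Unitary.star_mul_self_of_mem (hd i)),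
    congrArg diagonal (funext fun i ↦ Unitary.mul_star_self_of_mem (hd i))⟩

lemma reflection_mul_rotation_four {R : Type*} [Ring R] (x₁ x₂ a b : R) :
    diagonal ![1, 1, -1, -1] * !![x₁, 0, a, 0; 0, x₂, 0, b; 0, -b, 0, x₂; -a, 0, x₁, 0] =
      !![x₁, 0, a, 0; 0, x₂, 0, b; 0, b, 0, -x₂; a, 0, -x₁, 0] := by
  ext i j
  fin_cases i <;> fin_cases j <;> simp

section StarRing

variable {R : Type*} [Ring R] [StarRing R] {x₁ x₂ a b : R}

theorem rotation_four_mem_unitary (hx₁ : IsSelfAdjoint x₁) (hx₂ : IsSelfAdjoint x₂)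
    (ha : IsSelfAdjoint a) (hb : IsSelfAdjoint b) (hx₁a : Commute x₁ a) (hx₂b : Commute x₂ b)
    (h₁ : x₁ * x₁ + a * a = 1) (h₂ : x₂ * x₂ + b * b = 1) :
    !![x₁, 0, a, 0; 0, x₂, 0, b; 0, -b, 0, x₂; -a, 0, x₁, 0] ∈
      unitary (Matrix (Fin 4) (Fin 4) R) := by
  rw [Unitary.mem_iff]
  constructor <;>
  · ext i j
    fin_cases i <;> fin_cases j <;>
      simp [mul_apply, Fin.sum_univ_four, star_apply, hx₁.star_eq, hx₂.star_eq, ha.star_eq,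
        hb.star_eq, hx₁a.eq, hx₂b.eq, h₁, h₂, add_comm (a * a), add_comm (b * b)]

theorem reflected_rotation_four_mem_unitary (hx₁ : IsSelfAdjoint x₁) (hx₂ : IsSelfAdjoint x₂)
    (ha : IsSelfAdjoint a) (hb : IsSelfAdjoint b) (hx₁a : Commute x₁ a) (hx₂b : Commute x₂ b)
    (h₁ : x₁ * x₁ + a * a = 1) (h₂ : x₂ * x₂ + b * b = 1) :
    !![x₁, 0, a, 0; 0, x₂, 0, b; 0, b, 0, -x₂; a, 0, -x₁, 0] ∈
      unitary (Matrix (Fin 4) (Fin 4) R) := by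
  have hsign : ∀ i, ![(1 : R), 1, -1, -1] i ∈ unitary R := by
    intro i
    fin_cases i <;> simp [Unitary.mem_iff]
  rw [← reflection_mul_rotation_four]
  exact mul_mem (diagonal_mem_unitary_s11 hsign)
    (rotation_four_mem_unitary hx₁ hx₂ ha hb hx₁a hx₂b h₁ h₂)

end StarRing

theorem diag_two_eq_half_smul_add_half_smul_sub {𝕜 M : Type*} [Field 𝕜] [CharZero 𝕜]
    [AddCommGroup M] [Module 𝕜 M] (x₁ x₂ a b : M) :
    !![x₁, 0, 0, 0; 0, x₂, 0, 0; 0, 0, 0, 0; 0, 0, 0, 0] =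
      (1 / 2 : 𝕜) • !![x₁, 0, a, 0; 0, x₂, 0, b; 0, -b, 0, x₂; -a, 0, x₁, 0] +
      (1 / 2 : 𝕜) • !![x₁, 0, a, 0; 0, x₂, 0, b; 0, b, 0, -x₂; a, 0, -x₁, 0] -
      !![0, 0, a, 0; 0, 0, 0, b; 0, 0, 0, 0; 0, 0, 0, 0] := by
  ext i j
  fin_cases i <;> fin_cases j <;> simp <;> module

end Matrix

/-- Let `M` be a unital C⋆-algebra, `x₁, x₂ ∈ M` self-adjoint contractions,
and `a = √(1 - x₁²)`, `b = √(1 - x₂²)` the positive square roots given by continuous functional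
calculus.  Then `ũ₁ = [[x₁,0,a,0],[0,x₂,0,b],[0,-b,0,x₂],[-a,0,x₁,0]]` and
`ũ₂ = [[x₁,0,a,0],[0,x₂,0,b],[0,b,0,-x₂],[a,0,-x₁,0]]` are unitary in `M₄(M)`, and
`diag(x₁,x₂,0,0) = ½ũ₁ + ½ũ₂ - ũ₃`, where `ũ₃` has `(1,3)` entry `a`, `(2,4)` entry `b` and
all other entries `0`. -/
theorem unitary_decomposition_four_by_four
    (M : Type*) [CStarAlgebra M] [PartialOrder M] [StarOrderedRing M]
    (x₁ x₂ : M) (hsa₁ : IsSelfAdjoint x₁) (hsa₂ : IsSelfAdjoint x₂)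
    (hx₁ : ‖x₁‖ ≤ 1) (hx₂ : ‖x₂‖ ≤ 1) :
    (!![x₁, 0, CFC.sqrt (1 - x₁ * x₁), 0;
        0, x₂, 0, CFC.sqrt (1 - x₂ * x₂);
        0, -CFC.sqrt (1 - x₂ * x₂), 0, x₂;
        -CFC.sqrt (1 - x₁ * x₁), 0, x₁, 0] ∈
        unitary (Matrix (Fin 4) (Fin 4) M)) ∧
    (!![x₁, 0, CFC.sqrt (1 - x₁ * x₁), 0;
        0, x₂, 0, CFC.sqrt (1 - x₂ * x₂);
        0, CFC.sqrt (1 - x₂ * x₂), 0, -x₂;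
        CFC.sqrt (1 - x₁ * x₁), 0, -x₁, 0] ∈
        unitary (Matrix (Fin 4) (Fin 4) M)) ∧
    (!![x₁, 0, 0, 0;
        0, x₂, 0, 0;
        0, 0, 0, 0;
        0, 0, 0, 0] =
      (1 / 2 : ℂ) • !![x₁, 0, CFC.sqrt (1 - x₁ * x₁), 0;
          0, x₂, 0, CFC.sqrt (1 - x₂ * x₂);
          0, -CFC.sqrt (1 - x₂ * x₂), 0, x₂;
          -CFC.sqrt (1 - x₁ * x₁), 0, x₁, 0] +
      (1 / 2 : ℂ) • !![x₁, 0, CFC.sqrt (1 - x₁ * x₁), 0;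
          0, x₂, 0, CFC.sqrt (1 - x₂ * x₂);
          0, CFC.sqrt (1 - x₂ * x₂), 0, -x₂;
          CFC.sqrt (1 - x₁ * x₁), 0, -x₁, 0] -
      !![0, 0, CFC.sqrt (1 - x₁ * x₁), 0;
         0, 0, 0, CFC.sqrt (1 - x₂ * x₂);
         0, 0, 0, 0;
         0, 0, 0, 0]) := by
  have ha := (sqrt_nonneg (1 - x₁ * x₁)).isSelfAdjoint
  have hb := (sqrt_nonneg (1 - x₂ * x₂)).isSelfAdjoint
  have h₁ := hsa₁.mul_self_add_sqrt_one_sub_mul_self hx₁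
  have h₂ := hsa₂.mul_self_add_sqrt_one_sub_mul_self hx₂
  refine ⟨?_, ?_, Matrix.diag_two_eq_half_smul_add_half_smul_sub _ _ _ _⟩
  · exact Matrix.rotation_four_mem_unitary hsa₁ hsa₂ ha hb
      (commute_sqrt_one_sub_mul_self x₁) (commute_sqrt_one_sub_mul_self x₂) h₁ h₂
  · exact Matrix.reflected_rotation_four_mem_unitary hsa₁ hsa₂ ha hb
      (commute_sqrt_one_sub_mul_self x₁) (commute_sqrt_one_sub_mul_self x₂) h₁ h₂
end
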